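/- arXiv:2402.10919 — 2 statements merged into one kernel-verified Lean document; each statement's English description precedes it below -/
import Mathlib

section
/- The homomorphism φ₀ : A[Ã_n] → A[B_{n+1}] sending t_i to r_i (1 ≤ i ≤ n) and t_0 to ρ r_n ρ^{-1} has image exactly equal to the kernel of ξ : A[B_{n+1}] → ℤ. -/
/-- Defining relations of the Artin group of type `B_{n+1}` on generators indexed by
`Fin (n+1)`; index `i` represents the paper's generator `r_{i+1}`. -/
def BRels (n : ℕ) : Set (FreeGroup (Fin (n + 1))) :=
  { x | ∃ i j : Fin (n + 1), (i : ℕ) + 1 = j ∧ (j : ℕ) < n ∧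
      x = .of i * .of j * .of i * (.of j * .of i * .of j)⁻¹ } ∪
  { x | n ≥ 1 ∧ x = .of (⟨n - 1, by omega⟩ : Fin (n + 1)) * .of ⟨n, by omega⟩ *
      .of ⟨n - 1, by omega⟩ * .of ⟨n, by omega⟩ *
      (.of (⟨n, by omega⟩ : Fin (n + 1)) * .of ⟨n - 1, by omega⟩ *
        .of ⟨n, by omega⟩ * .of ⟨n - 1, by omega⟩)⁻¹ } ∪
  { x | ∃ i j : Fin (n + 1), (i : ℕ) + 2 ≤ j ∧ x = .of i * .of j * (.of j * .of i)⁻¹ }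

/-- The Artin group of type `B_{n+1}`. -/
abbrev ArtinB (n : ℕ) := PresentedGroup (BRels n)

/-- The standard generator `r_{i+1}` of `A[B_{n+1}]`. -/
def rB (n : ℕ) (i : Fin (n + 1)) : ArtinB n := PresentedGroup.of i

/-- `ρ = r_1 r_2 ⋯ r_{n+1}`. -/
def ρB (n : ℕ) : ArtinB n := (List.ofFn fun i => rB n i).prod

/-- Defining relations of the Euclidean braid group `A[Ã_n]` on generators `t_0, …, t_n`
indexed cyclically by `Fin (n+1)`. -/
def ARels (n : ℕ) : Set (FreeGroup (Fin (n + 1))) :=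
  { x | ∃ i : Fin (n + 1), x = .of i * .of (i + 1) * .of i *
      (.of (i + 1) * .of i * .of (i + 1))⁻¹ } ∪
  { x | ∃ i j : Fin (n + 1), j ≠ i + 1 ∧ i ≠ j + 1 ∧ i ≠ j ∧
      x = .of i * .of j * (.of j * .of i)⁻¹ }

/-- The Euclidean braid group `A[Ã_n]`. -/
abbrev ArtinA (n : ℕ) := PresentedGroup (ARels n)

/-- The standard generator `t_i` of `A[Ã_n]`. -/
def tA (n : ℕ) (i : Fin (n + 1)) : ArtinA n := PresentedGroup.of i

/-- `r_0, r_1, …, r_n` in `A[B_{n+1}]`: for `i ≥ 1` this is the standard generator `r_i`,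
and `r_0 = ρ r_n ρ⁻¹`. -/
def rcyc (n : ℕ) (i : Fin (n + 1)) : ArtinB n :=
  if h : (i : ℕ) = 0 then ρB n * rB n ⟨n - 1, by omega⟩ * (ρB n)⁻¹
  else rB n ⟨(i : ℕ) - 1, by omega⟩

/-!
Let `Γ` be the subgroup generated by `r_0, …, r_n`; it is the image of `φ₀`. Conjugation by
`ρ` permutes `r_0, …, r_n` cyclically: `ρ r_i ρ⁻¹ = r_{i+1}` for `1 ≤ i < n` by the braid
relations, `ρ r_n ρ⁻¹ = r_0` by definition, and `ρ² r_n ρ⁻² = r_1` is where the relation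
`r_n r_{n+1} r_n r_{n+1} = r_{n+1} r_n r_{n+1} r_n` enters. So `ρ` normalises `Γ`, and since
`r_{n+1} = (r_1 ⋯ r_n)⁻¹ ρ`, the group is generated by `Γ` and `ρ`. Hence `Γ` is normal and every
element is `γ ρ^m` with `γ ∈ Γ`; as `ξ` kills `Γ` and `ξ ρ = 1 ∈ ℤ`, the kernel of `ξ` is `Γ`.
-/

open Subgroup

namespace Subgroup

variable {G : Type*} [Group G]

theorem mem_normalizer_closure_range_of_conj {ι : Type*} {f : ι → G} {g : G} {σ : ι → ι}
    (hσ : Function.Surjective σ) (hf : ∀ i, g * f i * g⁻¹ = f (σ i)) :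
    g ∈ normalizer (closure (Set.range f)) := by
  refine normalizer_le_normalizer_closure _ (mem_normalizer_iff_conj_image_eq.mpr ?_)
  rw [← Set.range_comp, ← hσ.range_comp f]
  exact congrArg Set.range (funext hf)

theorem eq_ker_of_sup_zpowers_eq_top {M : Type*} [Group M] {H : Subgroup G} {g : G}
    (hg : g ∈ normalizer (H : Set G)) (hsup : H ⊔ zpowers g = ⊤) {ξ : G →* M} (hH : H ≤ ξ.ker)
    (hξg : ¬IsOfFinOrder (ξ g)) : H = ξ.ker := by
  have : H.Normal := normalizer_eq_top_iff.mp <| top_le_iff.mp <|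
    hsup ▸ sup_le le_normalizer (zpowers_le.mpr hg)
  refine le_antisymm hH fun x hx => ?_
  obtain ⟨h, hh, _, ⟨m, rfl⟩, rfl⟩ := mem_sup_of_normal_left.mp (hsup ▸ mem_top x)
  have hm : ξ g ^ m = ξ g ^ (0 : ℤ) := by
    rwa [MonoidHom.mem_ker, map_mul, hH hh, one_mul, map_zpow, ← zpow_zero (ξ g)] at hx
  simpa [injective_zpow_iff_not_isOfFinOrder.mpr hξg hm] using hh

end Subgroup

theorem PresentedGroup.range_eq_closure {α G : Type*} [Group G] {rels : Set (FreeGroup α)}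
    (f : PresentedGroup rels →* G) : f.range = closure (Set.range (f ∘ PresentedGroup.of)) := by
  rw [MonoidHom.range_eq_map, ← PresentedGroup.closure_range_of, MonoidHom.map_closure,
    Set.range_comp]

section CoxeterProd

variable {G : Type*} [Group G] (s : ℕ → G)

def coxeterProd (m : ℕ) : G := ((List.range m).map s).prod

@[simp] theorem coxeterProd_zero : coxeterProd s 0 = 1 := rfl

theorem coxeterProd_succ (m : ℕ) : coxeterProd s (m + 1) = coxeterProd s m * s m :=
  List.prod_range_succ s m

theorem coxeterProd_succ' (m : ℕ) :
    coxeterProd s (m + 1) = s 0 * coxeterProd (fun k => s (k + 1)) m :=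
  List.prod_range_succ' s m

variable {s}

theorem commute_coxeterProd_left {m l : ℕ} (h : ∀ k < m, Commute (s k) (s l)) :
    Commute (coxeterProd s m) (s l) :=
  Commute.list_prod_left _ _ (by simpa using h)

theorem coxeterProd_mul_eq_mul_coxeterProd {m a : ℕ} (ha : a + 2 ≤ m)
    (hbraid : s a * s (a + 1) * s a = s (a + 1) * s a * s (a + 1))
    (hcomm : ∀ k l, k + 2 ≤ l → l < m → Commute (s k) (s l)) :
    coxeterProd s m * s a = s (a + 1) * coxeterProd s m := by
  induction m, ha using Nat.le_induction with
  | base =>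
    have hc : Commute (coxeterProd s a) (s (a + 1)) :=
      commute_coxeterProd_left fun k hk => hcomm k (a + 1) (by omega) (by omega)
    rw [coxeterProd_succ, coxeterProd_succ, mul_assoc, mul_assoc, ← mul_assoc (s a), hbraid,
      ← mul_assoc, ← mul_assoc, hc.eq]
    simp only [mul_assoc]
  | succ m hm ih =>
    rw [coxeterProd_succ, mul_assoc, ((hcomm a m (by omega) (by omega)).eq).symm, ← mul_assoc,
      ih fun k l hkl hl => hcomm k l hkl (by omega), mul_assoc]

theorem coxeterProd_mul_self {m : ℕ}
    (hbraid : ∀ k ≤ m, s k * s (k + 1) * s k = s (k + 1) * s k * s (k + 1))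
    (hcomm : ∀ k l, k + 2 ≤ l → l < m + 2 → Commute (s k) (s l)) :
    coxeterProd s (m + 2) * coxeterProd s (m + 2) =
      s 0 * coxeterProd s (m + 2) * coxeterProd s (m + 1) := by
  have hshift : ∀ c ≤ m + 1, coxeterProd s (m + 2) * coxeterProd s c =
      coxeterProd (fun k => s (k + 1)) c * coxeterProd s (m + 2) := by
    intro c hc
    induction c with
    | zero => simp
    | succ c ih =>
      rw [coxeterProd_succ s c, coxeterProd_succ _ c, ← mul_assoc, ih (by omega), mul_assoc,
        coxeterProd_mul_eq_mul_coxeterProd (by omega) (hbraid c (by omega)) hcomm, ← mul_assoc]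
  rw [mul_assoc, hshift (m + 1) le_rfl, ← mul_assoc, ← coxeterProd_succ']

theorem coxeterProd_mul_self_mul_eq {m : ℕ}
    (hbraid : ∀ k ≤ m, s k * s (k + 1) * s k = s (k + 1) * s k * s (k + 1))
    (hcomm : ∀ k l, k + 2 ≤ l → l ≤ m + 2 → Commute (s k) (s l))
    (hfour : s (m + 1) * s (m + 2) * s (m + 1) * s (m + 2) =
      s (m + 2) * s (m + 1) * s (m + 2) * s (m + 1)) :
    coxeterProd s (m + 3) * coxeterProd s (m + 3) * s (m + 1) =
      s 0 * (coxeterProd s (m + 3) * coxeterProd s (m + 3)) := by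
  set δ := coxeterProd s (m + 1)
  have hρ : coxeterProd s (m + 3) = δ * s (m + 1) * s (m + 2) := by
    rw [coxeterProd_succ, coxeterProd_succ]
  have hc : Commute δ (s (m + 2)) :=
    commute_coxeterProd_left fun k hk => hcomm k (m + 2) (by omega) le_rfl
  have hsq : δ * s (m + 1) * (δ * s (m + 1)) = s 0 * (δ * s (m + 1)) * δ := by
    simpa only [coxeterProd_succ s (m + 1)] using
      coxeterProd_mul_self hbraid fun k l hkl hl => hcomm k l hkl (by omega)
  calc coxeterProd s (m + 3) * coxeterProd s (m + 3) * s (m + 1)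
      = δ * s (m + 1) * δ * (s (m + 2) * s (m + 1) * s (m + 2) * s (m + 1)) := by
        rw [hρ]; simp only [mul_assoc]; rw [hc.left_comm]
    _ = δ * s (m + 1) * δ * s (m + 1) * (s (m + 2) * s (m + 1) * s (m + 2)) := by
        rw [← hfour]; simp only [mul_assoc]
    _ = s 0 * (δ * s (m + 1)) * δ * (s (m + 2) * s (m + 1) * s (m + 2)) := by
        rw [← hsq]; simp only [mul_assoc]
    _ = s 0 * (coxeterProd s (m + 3) * coxeterProd s (m + 3)) := by
        rw [hρ]; simp only [mul_assoc]; rw [hc.left_comm]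

end CoxeterProd

section ArtinB

open Fin.NatCast

variable {n : ℕ}

theorem rB_braid {k : ℕ} (hk : k + 1 < n) :
    rB n k * rB n (k + 1 : ℕ) * rB n k = rB n (k + 1 : ℕ) * rB n k * rB n (k + 1 : ℕ) :=
  PresentedGroup.mk_eq_mk_of_mul_inv_mem <| Or.inl <| Or.inl
    ⟨k, (k + 1 : ℕ), by rw [Fin.val_cast_of_lt (by omega), Fin.val_cast_of_lt (by omega)],
      by rw [Fin.val_cast_of_lt (by omega)]; exact hk, rfl⟩

theorem rB_commute {k l : ℕ} (hkl : k + 2 ≤ l) (hl : l ≤ n) : Commute (rB n k) (rB n l) :=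
  PresentedGroup.mk_eq_mk_of_mul_inv_mem <| Or.inr
    ⟨k, l, by rw [Fin.val_cast_of_lt (by omega), Fin.val_cast_of_lt (by omega)]; exact hkl, rfl⟩

theorem rB_fourBraid {k : ℕ} (hk : k + 1 = n) :
    rB n k * rB n n * rB n k * rB n n = rB n n * rB n k * rB n n * rB n k := by
  have hk' : (k : Fin (n + 1)) = ⟨n - 1, by omega⟩ :=
    Fin.ext (by simp only [Fin.val_cast_of_lt (show k < n + 1 by omega)]; omega)
  rw [hk', Fin.natCast_eq_last]
  exact PresentedGroup.mk_eq_mk_of_mul_inv_mem <| Or.inl <| Or.inr ⟨by omega, rfl⟩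

theorem ρB_eq_coxeterProd : ρB n = coxeterProd (fun k : ℕ => rB n k) (n + 1) := by
  rw [ρB, coxeterProd, ← List.map_coe_finRange_eq_range, List.map_map, List.ofFn_eq_map]
  simp only [Function.comp_def, Fin.cast_val_eq_self]

theorem ρB_mul_rB {a : ℕ} (ha : a + 1 < n) : ρB n * rB n a = rB n (a + 1 : ℕ) * ρB n := by
  rw [ρB_eq_coxeterProd]
  exact coxeterProd_mul_eq_mul_coxeterProd (by omega) (rB_braid ha)
    fun k l hkl hl => rB_commute hkl (by omega)

theorem ρB_mul_ρB_mul_rB (hn : 2 ≤ n) :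
    ρB n * ρB n * rB n (n - 1 : ℕ) = rB n (0 : ℕ) * (ρB n * ρB n) := by
  obtain ⟨m, rfl⟩ := Nat.exists_eq_add_of_le' hn
  rw [ρB_eq_coxeterProd]
  exact coxeterProd_mul_self_mul_eq (s := fun k : ℕ => rB (m + 2) k)
    (fun k hk => rB_braid (by omega)) (fun k l hkl hl => rB_commute hkl hl) (rB_fourBraid rfl)

theorem rcyc_zero : rcyc n 0 = ρB n * rB n (n - 1 : ℕ) * (ρB n)⁻¹ := by
  rw [rcyc, dif_pos (show ((0 : Fin (n + 1)) : ℕ) = 0 from rfl),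
    Fin.natCast_eq_mk (by omega : n - 1 < n + 1)]

theorem rcyc_natCast_succ {k : ℕ} (hk : k < n) : rcyc n (k + 1 : ℕ) = rB n k := by
  rw [rcyc, dif_neg (by rw [Fin.val_cast_of_lt (by omega)]; omega),
    Fin.natCast_eq_mk (by omega : k < n + 1)]
  simp only [Fin.val_cast_of_lt (show k + 1 < n + 1 by omega), Nat.add_sub_cancel]

theorem ρB_conj_rcyc (hn : 2 ≤ n) (i : Fin (n + 1)) :
    ρB n * rcyc n i * (ρB n)⁻¹ = rcyc n (i + 1) := by
  obtain rfl | ⟨k, hk, rfl⟩ : i = 0 ∨ ∃ k < n, i = (k + 1 : ℕ) := by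
    rcases i with ⟨_ | k, hi⟩
    · exact Or.inl rfl
    · exact Or.inr ⟨k, by omega, Fin.ext (by simp only [Fin.val_cast_of_lt hi])⟩
  · have hone : rcyc n 1 = rB n (0 : ℕ) := by
      simpa using rcyc_natCast_succ (n := n) (k := 0) (by omega)
    rw [zero_add, hone, rcyc_zero, ← mul_inv_eq_iff_eq_mul.mpr (ρB_mul_ρB_mul_rB hn)]
    group
  · rcases Nat.lt_or_ge (k + 1) n with hk' | hk'
    · rw [rcyc_natCast_succ hk, ← Nat.cast_succ, rcyc_natCast_succ hk',
        ρB_mul_rB hk', mul_inv_cancel_right]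
    · rw [rcyc_natCast_succ hk, ← Nat.cast_succ,
        show (k + 1).succ = n + 1 by omega, Fin.natCast_self, rcyc_zero,
        show k = n - 1 by omega]

theorem closure_rcyc_sup_zpowers_ρB : closure (Set.range (rcyc n)) ⊔ zpowers (ρB n) = ⊤ := by
  have hlow (i : Fin n) : rB n i.castSucc ∈ closure (Set.range (rcyc n)) :=
    subset_closure ⟨i.succ, rfl⟩
  rw [eq_top_iff, ← PresentedGroup.closure_range_of, closure_le]
  rintro _ ⟨j, rfl⟩
  induction j using Fin.lastCases with
  | cast i => exact mem_sup_left (hlow i)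
  | last =>
    have hρ : ρB n = (List.ofFn fun i : Fin n => rB n i.castSucc).prod * rB n (Fin.last n) := by
      rw [ρB, List.ofFn_succ', List.prod_concat]
    rw [show PresentedGroup.of (Fin.last n) = rB n (Fin.last n) from rfl,
      eq_inv_mul_of_mul_eq hρ.symm]
    refine mul_mem (mem_sup_left (inv_mem (list_prod_mem ?_))) (mem_sup_right (mem_zpowers _))
    simpa using hlow

theorem closure_rcyc_le_ker {M : Type*} [CommGroup M] {ξ : ArtinB n →* M} (hn : 0 < n)
    (hξ : ∀ i : Fin (n + 1), (i : ℕ) < n → ξ (rB n i) = 1) :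
    closure (Set.range (rcyc n)) ≤ ξ.ker := by
  rw [closure_le]
  rintro _ ⟨i, rfl⟩
  rw [SetLike.mem_coe, MonoidHom.mem_ker, rcyc]
  split_ifs
  · simpa using hξ ⟨n - 1, by omega⟩ (show n - 1 < n by omega)
  · exact hξ _ (by simp; omega)

end ArtinB

/-- The image of `φ₀ : A[Ã_n] → A[B_{n+1}]` is exactly `ker ξ`. -/
theorem stmt7 (n : ℕ) (hn : 2 ≤ n)
    (ξ : ArtinB n →* Multiplicative ℤ)
    (hξ : ∀ i : Fin (n + 1), ξ (rB n i) = Multiplicative.ofAdd (if (i : ℕ) = n then 1 else 0))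
    (φ₀ : ArtinA n →* ArtinB n) (hφ : ∀ i : Fin (n + 1), φ₀ (tA n i) = rcyc n i) :
    φ₀.range = ξ.ker := by
  have hξρ : ξ (ρB n) = Multiplicative.ofAdd 1 := by
    simp only [ρB, map_list_prod, List.map_ofFn, List.prod_ofFn, Function.comp_apply, hξ,
      Fin.prod_univ_castSucc, Fin.val_last, Fin.val_castSucc]
    simp [Finset.prod_eq_one, Fin.is_lt, Nat.ne_of_lt]
  rw [PresentedGroup.range_eq_closure, show φ₀ ∘ PresentedGroup.of = rcyc n from funext hφ]
  refine eq_ker_of_sup_zpowers_eq_top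
    (mem_normalizer_closure_range_of_conj (add_right_surjective 1) (ρB_conj_rcyc hn))
    closure_rcyc_sup_zpowers_ρB (closure_rcyc_le_ker (by omega) fun i hi => ?_) ?_
  · rw [hξ, if_neg hi.ne, ofAdd_zero]
  · rw [hξρ, isOfFinOrder_iff_zpow_eq_one]
    simp
end

section
/- Let Q = h ⟨Y⟩ h^{-1} be a parabolic subgroup of A[B_{n+1}] with Q ⊆ ker ξ = φ₀(A[Ã_n]). Then P := φ₀^{-1}(Q) is a parabolic subgroup of A[Ã_n]. Explicitly, writing h = h_1 ρ^m with h_1 ∈ ker ξ and m = ξ(h), and noting Y ⊆ {r_1,...,r_n}, one has P = φ₀^{-1}(h_1) · ⟨f^m(φ₀^{-1}(Y))⟩ · φ₀^{-1}(h_1)^{-1}. -/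
/-- A parabolic subgroup of `A[Ã_n]`: a conjugate of a subgroup generated by a subset of
the standard generators `t_0, …, t_n`. -/
def IsParabolicA (n : ℕ) (P : Subgroup (ArtinA n)) : Prop :=
  ∃ (g : ArtinA n) (X : Set (Fin (n + 1))),
    P = Subgroup.map (MulAut.conj g).toMonoidHom (Subgroup.closure (tA n '' X))

/-- A parabolic subgroup of `A[B_{n+1}]`: a conjugate of a subgroup generated by a subset
of the standard generators `r_1, …, r_{n+1}`. -/
def IsParabolicB (n : ℕ) (P : Subgroup (ArtinB n)) : Prop :=
  ∃ (h : ArtinB n) (Y : Set (Fin (n + 1))),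
    P = Subgroup.map (MulAut.conj h).toMonoidHom (Subgroup.closure (rB n '' Y))

/-!
Conjugation by `ρ` permutes `r_0, …, r_n` (the images of `t_0, …, t_n` under `φ₀`) by the
cyclic shift `i ↦ i + 1`, just as `f` permutes `t_0, …, t_n`; the only non-formal case is
`ρ² r_n ρ⁻² = r_1`, which comes from the relation
`r_n r_{n+1} r_n r_{n+1} = r_{n+1} r_n r_{n+1} r_n`.
Since `ξ(r_{n+1}) ≠ 1` and `Q ⊆ ker ξ`, the set `Y` avoids `r_{n+1}`, so `⟨Y⟩ = φ₀⟨X⟩` where `X`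
is `Y` with indices shifted by one. Writing `h = φ₀(g₁) ρ^m` gives `Q = φ₀(g₁ f^m⟨X⟩ g₁⁻¹)`,
and injectivity of `φ₀` identifies `P`.
-/

lemma MulAut.zpow_apply_of_apply_eq {G ι : Type*} [Group G] {σ : MulAut G} {π : Equiv.Perm ι}
    {x : ι → G} (h : ∀ i, σ (x i) = x (π i)) (m : ℤ) (i : ι) :
    (σ ^ m) (x i) = x ((π ^ m) i) := by
  induction m using Int.induction_on generalizing i with
  | zero => rfl
  | succ m ih => rw [zpow_add_one, zpow_add_one, MulAut.mul_apply, h, ih, Equiv.Perm.mul_apply]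
  | pred m ih =>
    have hinv : σ⁻¹ (x i) = x (π⁻¹ i) := by
      rw [← MulAut.inv_apply_self G σ (x (π⁻¹ i)), h]; simp
    rw [zpow_sub_one, zpow_sub_one, MulAut.mul_apply, hinv, ih, Equiv.Perm.mul_apply]

lemma Subgroup.comap_map_conj_closure_image {G H : Type*} [Group G] [Group H] {φ : G →* H}
    (hφ : Function.Injective φ) (g : G) (S : Set G) :
    ((Subgroup.closure (φ '' S)).map (MulAut.conj (φ g)).toMonoidHom).comap φ =
      (Subgroup.closure S).map (MulAut.conj g).toMonoidHom := by
  have hcomm : (MulAut.conj (φ g)).toMonoidHom.comp φ = φ.comp (MulAut.conj g).toMonoidHom := by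
    ext; simp
  rw [← MonoidHom.map_closure, Subgroup.map_map, hcomm, ← Subgroup.map_map,
    Subgroup.comap_map_eq_self_of_injective hφ]

namespace ArtinB

variable {n : ℕ}

/-- The generator `r_{k+1}`, indexed by a natural number `k ≤ n` (junk value `1` for `k > n`). -/
def gen (n k : ℕ) : ArtinB n := if h : k ≤ n then rB n ⟨k, Nat.lt_succ_of_le h⟩ else 1

lemma gen_braid {k : ℕ} (hk : k + 1 < n) :
    gen n k * gen n (k + 1) * gen n k = gen n (k + 1) * gen n k * gen n (k + 1) := by
  simp only [gen, dif_pos hk.le, dif_pos (show k ≤ n by omega)]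
  exact PresentedGroup.mk_eq_mk_of_mul_inv_mem (Or.inl (Or.inl ⟨_, _, rfl, hk, rfl⟩))

lemma gen_commute {i j : ℕ} (hij : i + 2 ≤ j) (hj : j ≤ n) : Commute (gen n i) (gen n j) := by
  simp only [gen, dif_pos hj, dif_pos (show i ≤ n by omega)]
  exact PresentedGroup.mk_eq_mk_of_mul_inv_mem (Or.inr ⟨_, _, hij, rfl⟩)

lemma gen_braid_four {d : ℕ} (hd : d + 1 = n) :
    gen n d * gen n n * gen n d * gen n n = gen n n * gen n d * gen n n * gen n d := by
  subst hd
  simp only [gen, dif_pos le_rfl, dif_pos (Nat.le_succ d)]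
  exact PresentedGroup.mk_eq_mk_of_mul_inv_mem (Or.inl (Or.inr ⟨by omega, rfl⟩))

/-- The prefix product `r_1 r_2 ⋯ r_k`. -/
def genProd (n k : ℕ) : ArtinB n := ((List.range k).map (gen n)).prod

@[simp] lemma genProd_zero : genProd n 0 = 1 := rfl

lemma genProd_succ (k : ℕ) : genProd n (k + 1) = genProd n k * gen n k :=
  List.prod_range_succ _ _

lemma ρB_eq_genProd : ρB n = genProd n (n + 1) := by
  rw [ρB, genProd, ← List.map_coe_finRange_eq_range, List.map_map, List.ofFn_eq_map]
  congr 2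
  ext i
  simp [gen, dif_pos (Nat.lt_succ_iff.mp i.isLt)]

lemma commute_gen_genProd {m k : ℕ} (hkm : k + 1 ≤ m) (hm : m ≤ n) :
    Commute (gen n m) (genProd n k) := by
  induction k with
  | zero => exact Commute.one_right _
  | succ k ih =>
    rw [genProd_succ]
    exact (ih (by omega)).mul_right (gen_commute (by omega) hm).symm

lemma genProd_mul_gen {j k : ℕ} (hjk : j + 2 ≤ k) (hk : k ≤ n + 1) (hj : j + 1 < n) :
    genProd n k * gen n j = gen n (j + 1) * genProd n k := by
  induction k, hjk using Nat.le_induction with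
  | base =>
    have hc := (commute_gen_genProd (k := j) le_rfl hj.le).eq
    calc genProd n (j + 2) * gen n j
        = genProd n j * (gen n j * gen n (j + 1) * gen n j) := by
          simp only [genProd_succ, mul_assoc]
      _ = (gen n (j + 1) * genProd n j) * gen n j * gen n (j + 1) := by
          rw [gen_braid hj, hc]; group
      _ = gen n (j + 1) * genProd n (j + 2) := by simp only [genProd_succ, mul_assoc]
  | succ k hjk ih =>
    rw [genProd_succ, mul_assoc, (gen_commute hjk (by omega)).symm.eq, ← mul_assoc,
      ih (by omega), mul_assoc]

lemma gen_zero_mul_genProd_mul_genProd {m k : ℕ} (hmk : m < k) (hk : k ≤ n + 1) (hm : m < n) :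
    gen n 0 * genProd n k * genProd n m = genProd n (m + 1) * genProd n k := by
  induction m with
  | zero => simp [genProd_succ]
  | succ m ih =>
    rw [genProd_succ m, ← mul_assoc, ih (by omega) (by omega), mul_assoc,
      genProd_mul_gen (by omega) hk hm, ← mul_assoc, ← genProd_succ]

lemma ρB_sq_mul_gen {d : ℕ} (hd : d + 1 = n) :
    ρB n * ρB n * gen n d = gen n 0 * (ρB n * ρB n) := by
  have hc := (commute_gen_genProd (k := d) (m := n) (by omega) le_rfl).eq
  have hsq := gen_zero_mul_genProd_mul_genProd (n := n) (m := d) (k := d + 1) (by omega)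
    (by omega) (by omega)
  have hρ : ρB n = genProd n d * gen n d * gen n n := by
    rw [ρB_eq_genProd, ← hd, genProd_succ, genProd_succ]
  rw [genProd_succ] at hsq
  calc ρB n * ρB n * gen n d
      = genProd n d * gen n d * (gen n n * genProd n d) * gen n d * gen n n * gen n d := by
        rw [hρ]; group
    _ = genProd n d * gen n d * genProd n d * (gen n n * gen n d * gen n n * gen n d) := by
        rw [hc]; group
    _ = genProd n d * gen n d * (genProd n d * gen n d) * gen n n * gen n d * gen n n := by
        rw [← gen_braid_four hd]; group
    _ = gen n 0 * (genProd n d * gen n d) * (genProd n d * gen n n) * gen n d * gen n n := by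
        rw [← hsq]; group
    _ = gen n 0 * (ρB n * ρB n) := by rw [← hc, hρ]; group

lemma rcyc_eq_gen {i : Fin (n + 1)} (hi : (i : ℕ) ≠ 0) : rcyc n i = gen n (i - 1) := by
  simp only [rcyc, dif_neg hi, gen, dif_pos (show (i : ℕ) - 1 ≤ n by omega)]

lemma rcyc_of_val_eq_zero {i : Fin (n + 1)} (hi : (i : ℕ) = 0) :
    rcyc n i = ρB n * gen n (n - 1) * (ρB n)⁻¹ := by
  simp only [rcyc, dif_pos hi, gen, dif_pos (Nat.sub_le n 1)]

lemma conj_ρB_rcyc (i : Fin (n + 1)) :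
    MulAut.conj (ρB n) (rcyc n i) = rcyc n (finRotate (n + 1) i) := by
  rw [MulAut.conj_apply]
  rcases n with _ | d
  · have hρ : ρB 0 = gen 0 0 := by simp [ρB, gen, rB]
    simp [rcyc_of_val_eq_zero (Fin.val_eq_zero _), hρ]
  rcases eq_or_ne i (Fin.last _) with rfl | hlast
  · rw [finRotate_last, rcyc_of_val_eq_zero (i := 0) (by simp),
      rcyc_eq_gen (i := Fin.last _) (by simp)]
    simp
  have hval := coe_finRotate_of_ne_last hlast
  have hid : (i : ℕ) < d + 1 := Fin.val_lt_last hlast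
  rcases Nat.eq_zero_or_pos i with h0 | hpos
  · rw [rcyc_of_val_eq_zero h0, rcyc_eq_gen (by omega), hval, h0]
    calc ρB (d + 1) * (ρB (d + 1) * gen (d + 1) d * (ρB (d + 1))⁻¹) * (ρB (d + 1))⁻¹
        = ρB (d + 1) * ρB (d + 1) * gen (d + 1) d * (ρB (d + 1) * ρB (d + 1))⁻¹ := by group
      _ = gen (d + 1) 0 := by rw [ρB_sq_mul_gen rfl]; group
  · obtain ⟨k, hk⟩ : ∃ k, (i : ℕ) = k + 1 := ⟨i - 1, by omega⟩
    rw [rcyc_eq_gen (by omega), rcyc_eq_gen (by omega), hval, hk, ρB_eq_genProd,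
      Nat.add_sub_cancel, Nat.add_sub_cancel, genProd_mul_gen (by omega) le_rfl (by omega),
      mul_inv_cancel_right]

lemma gen_val (j : Fin (n + 1)) : gen n j = rB n j := by
  simp [gen, Nat.lt_succ_iff.mp j.isLt]

lemma rcyc_image_eq_rB_image {Y : Set (Fin (n + 1))} (hY : ∀ j ∈ Y, (j : ℕ) < n) :
    rcyc n '' {i | ∃ j ∈ Y, (i : ℕ) = (j : ℕ) + 1} = rB n '' Y := by
  ext x
  constructor
  · rintro ⟨i, ⟨j, hj, hij⟩, rfl⟩
    refine ⟨j, hj, ?_⟩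
    rw [rcyc_eq_gen (by omega), hij, Nat.add_sub_cancel, gen_val]
  · rintro ⟨j, hj, rfl⟩
    refine ⟨⟨j + 1, by have := hY j hj; omega⟩, ⟨j, hj, rfl⟩, ?_⟩
    rw [rcyc_eq_gen (by simp), Fin.val_mk, Nat.add_sub_cancel, gen_val]

lemma map_ρB {ξ : ArtinB n →* Multiplicative ℤ}
    (hξ : ∀ i : Fin (n + 1), ξ (rB n i) = Multiplicative.ofAdd (if (i : ℕ) = n then 1 else 0)) :
    ξ (ρB n) = Multiplicative.ofAdd 1 := by
  rw [ρB, map_list_prod, List.map_ofFn, List.prod_ofFn, Fin.prod_univ_castSucc,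
    Finset.prod_eq_one fun i _ => by simp [hξ, i.isLt.ne]]
  simp [hξ]

lemma val_lt_of_rB_mem_ker {ξ : ArtinB n →* Multiplicative ℤ}
    (hξ : ∀ i : Fin (n + 1), ξ (rB n i) = Multiplicative.ofAdd (if (i : ℕ) = n then 1 else 0))
    {j : Fin (n + 1)} (hj : rB n j ∈ ξ.ker) : (j : ℕ) < n := by
  rw [MonoidHom.mem_ker, hξ] at hj
  have := j.isLt
  by_contra hjn
  simp [show (j : ℕ) = n by omega] at hj

end ArtinB

theorem stmt13_general (n : ℕ)
    (ξ : ArtinB n →* Multiplicative ℤ)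
    (hξ : ∀ i : Fin (n + 1), ξ (rB n i) = Multiplicative.ofAdd (if (i : ℕ) = n then 1 else 0))
    (φ₀ : ArtinA n →* ArtinB n) (hφ : ∀ i : Fin (n + 1), φ₀ (tA n i) = rcyc n i)
    (hinj : Function.Injective φ₀) (hrange : φ₀.range = ξ.ker)
    (f : MulAut (ArtinA n)) (hf : ∀ i : Fin (n + 1), f (tA n i) = tA n (i + 1))
    (h : ArtinB n) (Y : Set (Fin (n + 1)))
    (hQ : Subgroup.map (MulAut.conj h).toMonoidHom (Subgroup.closure (rB n '' Y)) ≤ ξ.ker) :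
    IsParabolicA n
      ((Subgroup.map (MulAut.conj h).toMonoidHom (Subgroup.closure (rB n '' Y))).comap φ₀) ∧
    (∀ j ∈ Y, (j : ℕ) < n) ∧
    ∃ g₁ : ArtinA n,
      φ₀ g₁ = h * (ρB n) ^ (-(Multiplicative.toAdd (ξ h))) ∧
      (Subgroup.map (MulAut.conj h).toMonoidHom (Subgroup.closure (rB n '' Y))).comap φ₀ =
        Subgroup.map (MulAut.conj g₁).toMonoidHom
          (Subgroup.closure ((f ^ (Multiplicative.toAdd (ξ h))) ''
            (tA n '' {i : Fin (n + 1) | ∃ j ∈ Y, (i : ℕ) = (j : ℕ) + 1}))) := by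
  set m := Multiplicative.toAdd (ξ h)
  set X := {i : Fin (n + 1) | ∃ j ∈ Y, (i : ℕ) = (j : ℕ) + 1}
  have hY : ∀ j ∈ Y, (j : ℕ) < n := fun j hj => ArtinB.val_lt_of_rB_mem_ker hξ <| by
    simpa [MulAut.conj_apply] using hQ ⟨rB n j, Subgroup.subset_closure ⟨j, hj, rfl⟩, rfl⟩
  obtain ⟨g₁, hg₁⟩ : h * ρB n ^ (-m) ∈ φ₀.range := by
    rw [hrange, MonoidHom.mem_ker, map_mul, map_zpow, ArtinB.map_ρB hξ]
    simp [m, ← ofAdd_zsmul]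
  have hh : h = φ₀ g₁ * ρB n ^ m := by rw [hg₁, zpow_neg, inv_mul_cancel_right]
  have hf_zpow := MulAut.zpow_apply_of_apply_eq (x := tA n) (π := finRotate (n + 1))
    (fun i => by rw [hf, finRotate_apply]) m
  have hρ_zpow := MulAut.zpow_apply_of_apply_eq (ArtinB.conj_ρB_rcyc (n := n)) m
  have himage : φ₀ '' ((f ^ m) '' (tA n '' X)) = MulAut.conj (ρB n ^ m) '' (rB n '' Y) := by
    rw [← ArtinB.rcyc_image_eq_rB_image hY, map_zpow, Set.image_image, Set.image_image,
      Set.image_image]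
    exact Set.image_congr fun i _ => by rw [hf_zpow, hφ, hρ_zpow]
  have hP : (Subgroup.map (MulAut.conj h).toMonoidHom (Subgroup.closure (rB n '' Y))).comap φ₀ =
      Subgroup.map (MulAut.conj g₁).toMonoidHom (Subgroup.closure ((f ^ m) '' (tA n '' X))) := by
    rw [← Subgroup.comap_map_conj_closure_image hinj, himage, ← MulEquiv.coe_toMonoidHom,
      ← MonoidHom.map_closure, Subgroup.map_map, hh, map_mul]
    rfl
  refine ⟨⟨g₁, (finRotate (n + 1) ^ m) '' X, ?_⟩, hY, g₁, hg₁, hP⟩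
  rw [hP, Set.image_image, Set.image_image]
  exact congrArg _ (congrArg _ (Set.image_congr fun i _ => hf_zpow i))

/-- If a parabolic subgroup `Q = h ⟨Y⟩ h⁻¹` of `A[B_{n+1}]` lies in `ker ξ = φ₀(A[Ã_n])`,
then `P = φ₀⁻¹(Q)` is a parabolic subgroup of `A[Ã_n]`; explicitly, `Y ⊆ {r_1,…,r_n}` and,
writing `h = h₁ ρ^m` with `h₁ ∈ ker ξ` and `m = ξ(h)`, one has
`P = φ₀⁻¹(h₁) ⟨f^m(φ₀⁻¹(Y))⟩ φ₀⁻¹(h₁)⁻¹`. -/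
theorem stmt13 (n : ℕ) (hn : 2 ≤ n)
    (ξ : ArtinB n →* Multiplicative ℤ)
    (hξ : ∀ i : Fin (n + 1), ξ (rB n i) = Multiplicative.ofAdd (if (i : ℕ) = n then 1 else 0))
    (φ₀ : ArtinA n →* ArtinB n) (hφ : ∀ i : Fin (n + 1), φ₀ (tA n i) = rcyc n i)
    (hinj : Function.Injective φ₀) (hrange : φ₀.range = ξ.ker)
    (f : MulAut (ArtinA n)) (hf : ∀ i : Fin (n + 1), f (tA n i) = tA n (i + 1))
    (h : ArtinB n) (Y : Set (Fin (n + 1)))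
    (hQ : Subgroup.map (MulAut.conj h).toMonoidHom (Subgroup.closure (rB n '' Y)) ≤ ξ.ker) :
    IsParabolicA n
      ((Subgroup.map (MulAut.conj h).toMonoidHom (Subgroup.closure (rB n '' Y))).comap φ₀) ∧
    (∀ j ∈ Y, (j : ℕ) < n) ∧
    ∃ g₁ : ArtinA n,
      φ₀ g₁ = h * (ρB n) ^ (-(Multiplicative.toAdd (ξ h))) ∧
      (Subgroup.map (MulAut.conj h).toMonoidHom (Subgroup.closure (rB n '' Y))).comap φ₀ =
        Subgroup.map (MulAut.conj g₁).toMonoidHom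
          (Subgroup.closure ((f ^ (Multiplicative.toAdd (ξ h))) ''
            (tA n '' {i : Fin (n + 1) | ∃ j ∈ Y, (i : ℕ) = (j : ℕ) + 1}))) :=
  stmt13_general n ξ hξ φ₀ hφ hinj hrange f hf h Y hQ
end
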